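/- The model evidence of the NIG prior is a Student-t density: for any y, δ ∈ ℝ, γ > 0, α > 0, β > 0, the double Lebesgue integral over s ∈ (0,∞) and μ ∈ ℝ of the product of the Gaussian likelihood (1/√(2πs)) · exp(−(y−μ)²/(2s)) with the NIG density p(μ,s) = (β^α/Γ(α)) · (√γ/√(2πs)) · s^{−(α+1)} · exp(−(2β+γ(δ−μ)²)/(2s)) equals (Γ(α+1/2)/Γ(α)) · √(γ/π) · (2β(1+γ))^α · (γ(y−δ)² + 2β(1+γ))^{−(α+1/2)}, which is the Student-t density St(y; δ, β(1+γ)/(γα), 2α). -/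
import Mathlib

open MeasureTheory

/-- The Normal-Inverse-Gamma (NIG) density with parameters `δ γ α β`, as a function of
the Gaussian mean `μ` and the Gaussian variance `s = σ²`. -/
noncomputable def nigPdf (δ γ α β μ s : ℝ) : ℝ :=
  (β ^ α / Real.Gamma α) * (Real.sqrt γ / Real.sqrt (2 * Real.pi * s)) *
    s ^ (-(α + 1)) * Real.exp (-(2 * β + γ * (δ - μ) ^ 2) / (2 * s))


/-- The Gaussian likelihood of an observation `y` given mean `μ` and variance `s`. -/
noncomputable def gaussPdf (y μ s : ℝ) : ℝ :=
  (1 / Real.sqrt (2 * Real.pi * s)) * Real.exp (-(y - μ) ^ 2 / (2 * s))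

section aux
open Real Set

lemma gauss_shift (b m : ℝ) : ∫ μ : ℝ, Real.exp (-(b * (μ - m) ^ 2)) = Real.sqrt (π / b) := by
  rw [← integral_gaussian b]
  rw [← integral_sub_right_eq_self (fun x => Real.exp (-b * x ^ 2)) m]
  simp [neg_mul]

lemma inner_int (y δ γ α β : ℝ) (hγ : 0 < γ) {s : ℝ} (hs : 0 < s) :
    ∫ μ : ℝ, gaussPdf y μ s * nigPdf δ γ α β μ s
      = (β ^ α / Real.Gamma α) * Real.sqrt (γ / (2 * π * (1 + γ))) * s ^ (-(α + 3/2)) *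
          Real.exp (-((β + γ * (y - δ) ^ 2 / (2 * (1 + γ))) * s⁻¹)) := by
  have h1γ : (0:ℝ) < 1 + γ := by linarith
  have hπs : (0:ℝ) < 2 * π * s := by positivity
  set K : ℝ := (β ^ α / Real.Gamma α) * (Real.sqrt γ / (2 * π * s)) * s ^ (-(α + 1)) *
      Real.exp (-((β + γ * (y - δ) ^ 2 / (2 * (1 + γ))) * s⁻¹)) with hK
  set b : ℝ := (1 + γ) / (2 * s) with hb
  set m : ℝ := (y + γ * δ) / (1 + γ) with hm
  have key : ∀ μ : ℝ, gaussPdf y μ s * nigPdf δ γ α β μ s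
      = K * Real.exp (-(b * (μ - m) ^ 2)) := by
    intro μ
    unfold gaussPdf nigPdf
    rw [hK, hb, hm]
    rw [show (1 / Real.sqrt (2 * π * s)) * Real.exp (-(y - μ) ^ 2 / (2 * s)) *
        ((β ^ α / Real.Gamma α) * (Real.sqrt γ / Real.sqrt (2 * π * s)) *
          s ^ (-(α + 1)) * Real.exp (-(2 * β + γ * (δ - μ) ^ 2) / (2 * s)))
      = (β ^ α / Real.Gamma α) *
          (Real.sqrt γ / (Real.sqrt (2 * π * s) * Real.sqrt (2 * π * s))) * s ^ (-(α + 1)) *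
          (Real.exp (-(y - μ) ^ 2 / (2 * s)) * Real.exp (-(2 * β + γ * (δ - μ) ^ 2) / (2 * s)))
      by ring]
    rw [Real.mul_self_sqrt hπs.le, ← Real.exp_add]
    rw [show -(y - μ) ^ 2 / (2 * s) + -(2 * β + γ * (δ - μ) ^ 2) / (2 * s)
      = -((β + γ * (y - δ) ^ 2 / (2 * (1 + γ))) * s⁻¹) +
        -((1 + γ) / (2 * s) * (μ - (y + γ * δ) / (1 + γ)) ^ 2) by
        field_simp
        ring]
    rw [Real.exp_add]
    ring
  simp_rw [key]
  rw [MeasureTheory.integral_const_mul, gauss_shift b m, hK]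
  have hb0 : (0:ℝ) < b := by rw [hb]; positivity
  have hE : s ^ (-(α + 3/2)) = s ^ (-(α + 1)) * s ^ (-(1/2) : ℝ) := by
    rw [← Real.rpow_add hs]; congr 1; ring
  have hsq : Real.sqrt γ / (2 * π * s) * Real.sqrt (π / b)
      = Real.sqrt (γ / (2 * π * (1 + γ))) * s ^ (-(1/2) : ℝ) := by
    have h1 : Real.sqrt γ / (2 * π * s) * Real.sqrt (π / b)
        = Real.sqrt (γ * (π / b) / (2 * π * s) ^ 2) := by
      rw [Real.sqrt_div (by positivity) ((2 * π * s) ^ 2), Real.sqrt_mul hγ.le,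
        Real.sqrt_sq hπs.le]
      ring
    have h2 : Real.sqrt (γ / (2 * π * (1 + γ))) * s ^ (-(1/2) : ℝ)
        = Real.sqrt (γ / (2 * π * (1 + γ)) / s) := by
      rw [Real.sqrt_div (by positivity) s, Real.rpow_neg hs.le, ← Real.sqrt_eq_rpow,
        div_eq_mul_inv]
      ring
    rw [h1, h2]
    congr 1
    rw [hb]
    have hπ : π ≠ 0 := Real.pi_ne_zero
    field_simp
  rw [hE]
  calc β ^ α / Real.Gamma α * (Real.sqrt γ / (2 * π * s)) * s ^ (-(α + 1)) *
        Real.exp (-((β + γ * (y - δ) ^ 2 / (2 * (1 + γ))) * s⁻¹)) * Real.sqrt (π / b)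
      = β ^ α / Real.Gamma α * (Real.sqrt γ / (2 * π * s) * Real.sqrt (π / b)) *
        s ^ (-(α + 1)) * Real.exp (-((β + γ * (y - δ) ^ 2 / (2 * (1 + γ))) * s⁻¹)) := by ring
    _ = _ := by rw [hsq]; ring

lemma outer_int (α c : ℝ) (hα : 0 < α) (hc : 0 < c) :
    ∫ s in Ioi (0:ℝ), s ^ (-(α + 3/2)) * Real.exp (-(c * s⁻¹))
      = c ^ (-(α + 1/2)) * Real.Gamma (α + 1/2) := by
  have h := integral_comp_rpow_Ioi (fun t => t ^ (α + 1/2 - 1) * Real.exp (-(c * t)))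
      (p := -1) (by norm_num)
  have h2 : ∫ x in Ioi (0:ℝ), x ^ (-(α + 3/2)) * Real.exp (-(c * x⁻¹))
      = ∫ t in Ioi (0:ℝ), t ^ (α + 1/2 - 1) * Real.exp (-(c * t)) := by
    rw [← h]
    refine setIntegral_congr_fun measurableSet_Ioi (fun x hx => ?_)
    have hx0 : (0:ℝ) < x := hx
    simp only [smul_eq_mul, abs_neg, abs_one]
    rw [Real.rpow_neg_one, Real.inv_rpow hx0.le, ← Real.rpow_neg hx0.le]
    rw [show (-1 - 1 : ℝ) = -2 by norm_num]
    rw [← mul_assoc, one_mul, ← Real.rpow_add hx0]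
    ring_nf
  rw [h2, Real.integral_rpow_mul_exp_neg_mul_Ioi (by linarith) hc]
  rw [one_div, ← Real.rpow_neg_one, ← Real.rpow_mul hc.le]
  ring_nf

end aux

/-- The model evidence of the NIG prior is a Student-t density
St(y; δ, β(1+γ)/(γα), 2α). -/
theorem nigPdf_model_evidence (y δ γ α β : ℝ)
    (hγ : 0 < γ) (hα : 0 < α) (hβ : 0 < β) :
    (∫ s in Set.Ioi (0 : ℝ), ∫ μ : ℝ, gaussPdf y μ s * nigPdf δ γ α β μ s)
      = (Real.Gamma (α + 1 / 2) / Real.Gamma α) * Real.sqrt (γ / Real.pi) *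
          (2 * β * (1 + γ)) ^ α *
          (γ * (y - δ) ^ 2 + 2 * β * (1 + γ)) ^ (-(α + 1 / 2)) := by
  have h1γ : (0:ℝ) < 1 + γ := by linarith
  set c : ℝ := β + γ * (y - δ) ^ 2 / (2 * (1 + γ)) with hc
  have hc0 : 0 < c := by
    have h2 : 0 ≤ γ * (y - δ) ^ 2 / (2 * (1 + γ)) :=
      div_nonneg (mul_nonneg hγ.le (sq_nonneg _)) (by linarith)
    rw [hc]; linarith
  set D : ℝ := γ * (y - δ) ^ 2 + 2 * β * (1 + γ) with hD
  have hD0 : 0 < D := by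
    have := mul_nonneg hγ.le (sq_nonneg (y - δ))
    rw [hD]; nlinarith
  have step1 : (∫ s in Set.Ioi (0 : ℝ), ∫ μ : ℝ, gaussPdf y μ s * nigPdf δ γ α β μ s)
      = (β ^ α / Real.Gamma α) * Real.sqrt (γ / (2 * Real.pi * (1 + γ))) *
          ∫ s in Set.Ioi (0:ℝ), s ^ (-(α + 3/2)) * Real.exp (-(c * s⁻¹)) := by
    rw [← MeasureTheory.integral_const_mul]
    refine setIntegral_congr_fun measurableSet_Ioi (fun s hs => ?_)
    rw [inner_int y δ γ α β hγ hs, hc]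
    ring
  rw [step1, outer_int α c hα hc0]
  -- now the pure algebra
  have hcD : c = D / (2 * (1 + γ)) := by rw [hc, hD]; field_simp; ring
  have hsplit : c ^ (-(α + 1/2))
      = D ^ (-(α + 1/2)) * ((2 * (1 + γ)) ^ α * Real.sqrt (2 * (1 + γ))) := by
    rw [hcD, Real.div_rpow hD0.le (by positivity : (0:ℝ) ≤ 2 * (1 + γ)),
      Real.rpow_neg (by positivity : (0:ℝ) ≤ 2 * (1 + γ)), div_inv_eq_mul,
      Real.rpow_add (by positivity : (0:ℝ) < 2 * (1 + γ)), ← Real.sqrt_eq_rpow]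
  have hβmul : β ^ α * (2 * (1 + γ)) ^ α = (2 * β * (1 + γ)) ^ α := by
    rw [← Real.mul_rpow hβ.le (by positivity : (0:ℝ) ≤ 2 * (1 + γ))]
    congr 1; ring
  have hsqrt : Real.sqrt (γ / (2 * Real.pi * (1 + γ))) * Real.sqrt (2 * (1 + γ))
      = Real.sqrt (γ / Real.pi) := by
    rw [← Real.sqrt_mul (by positivity) (2 * (1 + γ))]
    congr 1
    have hπ : Real.pi ≠ 0 := Real.pi_ne_zero
    field_simp
  calc (β ^ α / Real.Gamma α) * Real.sqrt (γ / (2 * Real.pi * (1 + γ))) *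
        (c ^ (-(α + 1/2)) * Real.Gamma (α + 1/2))
      = (Real.Gamma (α + 1/2) / Real.Gamma α) *
          (Real.sqrt (γ / (2 * Real.pi * (1 + γ))) * Real.sqrt (2 * (1 + γ))) *
          (β ^ α * (2 * (1 + γ)) ^ α) * D ^ (-(α + 1/2)) := by
        rw [hsplit]; ring
    _ = _ := by rw [hβmul, hsqrt, hD]
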